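/- arXiv:1612.05317 — 3 statements merged into one kernel-verified Lean document; each statement's English description precedes it below -/
import Mathlib

section
/- Let n ∈ ℕ and x : Fin n → Bool. Define the amplitude function ψ_x : (Fin n → Fin 4) → ℂ by ψ_x(z) = ∏_{i : Fin n} a_i(z i), where a_i(b) = (√2)⁻¹ if x i = true and b ∈ {0, 1}, a_i(b) = 1 if x i = false and b = 2, and a_i(b) = 0 otherwise. Let A be the set of strings z : Fin n → Fin 4 such that z i ∈ {0, 1, 2} for every i and it is not the case that both the value 0 and the value 1 occur among the z i. Then ψ_x(z) = 0 for every z ∉ A if and only if the Hamming weight of x (the number of indices i with x i = true) is at most 1. -/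
/-- Amplitude function of the product state where active parties (`x i = true`)
hold `(|0̂⟩ + |1̂⟩)/√2` and inactive parties hold `|∅⟩ = |2⟩`. -/
noncomputable def psiAmp (n : ℕ) (x : Fin n → Bool) (z : Fin n → Fin 4) : ℂ :=
  ∏ i, (if x i = true ∧ (z i = 0 ∨ z i = 1) then (Real.sqrt 2 : ℂ)⁻¹
        else if x i = false ∧ z i = 2 then 1 else 0)

/-!
Since `ψ_x` is a product state, `ψ_x(z) ≠ 0` iff each `z i` lies in the support of the local
state of party `i`: `{0̂, 1̂}` if it is active, `{∅}` if not. So `0̂` and `1̂` occur only at active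
parties, and two distinct active parties `i ≠ j` give a nonzero amplitude at a string carrying
`0̂` at `i` and `1̂` at `j`.
-/

def localSupport : Bool → Set (Fin 4)
  | true => {0, 1}
  | false => {2}

def consistentStrings (n : ℕ) : Set (Fin n → Fin 4) :=
  {z | (∀ i, z i = 0 ∨ z i = 1 ∨ z i = 2) ∧ ¬ ((∃ i, z i = 0) ∧ (∃ i, z i = 1))}

theorem psiAmp_ne_zero_iff {n : ℕ} (x : Fin n → Bool) (z : Fin n → Fin 4) :
    psiAmp n x z ≠ 0 ↔ ∀ i, z i ∈ localSupport (x i) := by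
  simp only [psiAmp, Finset.prod_ne_zero_iff, Finset.mem_univ, true_implies]
  refine forall_congr' fun i => ?_
  generalize z i = b
  cases x i <;> fin_cases b <;> simp [localSupport]

theorem localSupport_subset (b : Bool) : localSupport b ⊆ {0, 1, 2} := by
  cases b <;> simp [localSupport, Set.insert_subset_iff]

theorem eq_true_of_mem_localSupport {b : Bool} {c : Fin 4} (hc : c ∈ localSupport b)
    (h : c = 0 ∨ c = 1) : b = true := by
  cases b <;> rcases h with rfl | rfl <;> simp_all [localSupport]

theorem mem_consistentStrings {n : ℕ} {x : Fin n → Bool} {z : Fin n → Fin 4}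
    (hx : ∀ i, x i = true → ∀ j, x j = true → i = j) (hz : ∀ i, z i ∈ localSupport (x i)) :
    z ∈ consistentStrings n := by
  refine ⟨fun i => ?_, ?_⟩
  · simpa using localSupport_subset (x i) (hz i)
  · rintro ⟨⟨i, hi⟩, ⟨j, hj⟩⟩
    have hij : i = j :=
      hx i (eq_true_of_mem_localSupport (hz i) (.inl hi))
        j (eq_true_of_mem_localSupport (hz j) (.inr hj))
    subst hij
    simp [hi] at hj

theorem exists_mem_localSupport_zero_one {n : ℕ} {x : Fin n → Bool} {i j : Fin n}
    (hij : i ≠ j) (hi : x i = true) (hj : x j = true) :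
    ∃ z : Fin n → Fin 4, (∀ k, z k ∈ localSupport (x k)) ∧ z i = 0 ∧ z j = 1 := by
  refine ⟨fun k => if x k then (if k = j then 1 else 0) else 2, fun k => ?_,
    by simp [hi, hij], by simp [hj]⟩
  cases hk : x k
  · simp [localSupport, hk]
  · rcases eq_or_ne k j with rfl | hkj <;> simp [localSupport, *]

theorem psiAmp_support_subset_iff (n : ℕ) (x : Fin n → Bool) :
    (∀ z, psiAmp n x z ≠ 0 → z ∈ consistentStrings n) ↔
      ∀ i, x i = true → ∀ j, x j = true → i = j := by
  simp only [psiAmp_ne_zero_iff]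
  refine ⟨fun h i hi j hj => ?_, fun hx z hz => mem_consistentStrings hx hz⟩
  by_contra hij
  obtain ⟨z, hz, hzi, hzj⟩ := exists_mem_localSupport_zero_one hij hi hj
  exact (h z hz).2 ⟨⟨i, hzi⟩, ⟨j, hzj⟩⟩

/-- `ψ_x` is supported on the consistent set `A` iff the Hamming weight of `x` is at most 1. -/
theorem stmt0 (n : ℕ) (x : Fin n → Bool) :
    (∀ z : Fin n → Fin 4,
        z ∉ {z : Fin n → Fin 4 | (∀ i, z i = 0 ∨ z i = 1 ∨ z i = 2) ∧
              ¬ ((∃ i, z i = 0) ∧ (∃ i, z i = 1))} →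
        psiAmp n x z = 0)
    ↔ (Finset.univ.filter (fun i => x i = true)).card ≤ 1 := by
  rw [Finset.card_le_one]
  simp only [Finset.mem_filter, Finset.mem_univ, true_and]
  rw [← psiAmp_support_subset_iff]
  exact forall_congr' fun z => not_imp_comm
end

section
/- Let V be a finite type, let E : V → V → Prop be a decidable relation, and let x : V → Bool be an input bit at each node. Define the one-round Boolean flooding update F : (V → Bool) → (V → Bool) by F Y v = Y v || (there exists u with E u v and Y u = true). Suppose Δ : ℕ is such that for every ordered pair of nodes (u, v) there exists a directed walk from u to v of length at most Δ. Then for every node v, F^[Δ] x v = true if and only if there exists a node u with x u = true; consequently the negation of F^[Δ] x v equals T₀(x) := ¬⋁_{u} x u at every node v. -/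
/-- One synchronous round of Boolean flooding (OR-flooding):
`F Y v = Y v || (∃ in-neighbor u with Y u = true)`. -/
def floodBoolStep {V : Type*} [Fintype V] (E : V → V → Prop) [DecidableRel E]
    (Y : V → Bool) : V → Bool :=
  fun v => Y v || decide (∃ u, E u v ∧ Y u = true)

lemma flood_persist {V : Type*} [Fintype V] (E : V → V → Prop) [DecidableRel E]
    (Y : V → Bool) (v : V) (h : Y v = true) : floodBoolStep E Y v = true := by
  simp [floodBoolStep, h]

lemma flood_mono {V : Type*} [Fintype V] (E : V → V → Prop) [DecidableRel E]
    (x : V → Bool) (v : V) {n m : ℕ} (hnm : n ≤ m)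
    (h : (floodBoolStep E)^[n] x v = true) : (floodBoolStep E)^[m] x v = true := by
  induction m with
  | zero =>
    have : n = 0 := by omega
    subst this; exact h
  | succ m ih =>
    rcases Nat.lt_or_ge n (m+1) with h1 | h1
    · rw [Function.iterate_succ_apply']
      exact flood_persist E _ v (ih (by omega))
    · have : n = m + 1 := by omega
      subst this; exact h

lemma flood_walk {V : Type*} [Fintype V] (E : V → V → Prop) [DecidableRel E]
    (x : V → Bool) : ∀ (ℓ : ℕ) (u v : V), x u = true →
    ∀ w : Fin (ℓ + 1) → V, w 0 = u → w (Fin.last ℓ) = v →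
    (∀ i : Fin ℓ, E (w i.castSucc) (w i.succ)) →
    (floodBoolStep E)^[ℓ] x v = true := by
  intro ℓ
  induction ℓ with
  | zero =>
    intro u v hu w h0 hl _
    simp only [Function.iterate_zero, id]
    have : (0 : Fin 1) = Fin.last 0 := rfl
    rw [← hl, ← this, h0]; exact hu
  | succ ℓ ih =>
    intro u v hu w h0 hl he
    rw [Function.iterate_succ_apply']
    have hmid : (floodBoolStep E)^[ℓ] x (w (Fin.last ℓ).castSucc) = true := by
      refine ih u _ hu (fun i => w i.castSucc) ?_ rfl ?_
      · simpa using h0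
      · intro i
        have := he i.castSucc
        simpa only [Fin.succ_castSucc] using this
    have hedge : E (w (Fin.last ℓ).castSucc) (w (Fin.last (ℓ+1))) := by
      have := he (Fin.last ℓ)
      simpa [Fin.succ_last] using this
    rw [← hl]
    simp only [floodBoolStep, Bool.or_eq_true, decide_eq_true_eq]
    exact Or.inr ⟨_, hedge, hmid⟩

lemma flood_allfalse {V : Type*} [Fintype V] (E : V → V → Prop) [DecidableRel E]
    (x : V → Bool) (hx : ∀ u, x u = false) (n : ℕ) : (floodBoolStep E)^[n] x = x := by
  induction n with
  | zero => rfl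
  | succ n ih =>
    rw [Function.iterate_succ_apply', ih]
    funext v
    simp [floodBoolStep, hx]

/-- If every ordered pair of nodes is joined by a directed walk of length at most `Δ`,
then after `Δ` rounds of Boolean flooding every node holds the OR of all input bits;
consequently its negation equals `T₀(x) = ¬⋁ᵤ x u` at every node. -/
theorem stmt7 {V : Type*} [Fintype V] (E : V → V → Prop) [DecidableRel E]
    (x : V → Bool) (Δ : ℕ)
    (hΔ : ∀ u v : V, ∃ ℓ, ℓ ≤ Δ ∧ ∃ w : Fin (ℓ + 1) → V,
        w 0 = u ∧ w (Fin.last ℓ) = v ∧ ∀ i : Fin ℓ, E (w i.castSucc) (w i.succ)) :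
    ∀ v : V,
      ((floodBoolStep E)^[Δ] x v = true ↔ ∃ u, x u = true) ∧
      (!((floodBoolStep E)^[Δ] x v) = !(decide (∃ u, x u = true))) := by
  intro v
  have hiff : (floodBoolStep E)^[Δ] x v = true ↔ ∃ u, x u = true := by
    constructor
    · intro h
      by_contra hc
      push_neg at hc
      have hx : ∀ u, x u = false := fun u => by
        cases hu : x u
        · rfl
        · exact absurd hu (hc u)
      rw [flood_allfalse E x hx Δ] at h
      exact hc v h
    · rintro ⟨u, hu⟩
      obtain ⟨ℓ, hℓ, w, h0, hl, he⟩ := hΔ u v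
      exact flood_mono E x v hℓ (flood_walk E x ℓ u v hu w h0 hl he)
  refine ⟨hiff, ?_⟩
  rcases h : (floodBoolStep E)^[Δ] x v with _ | _
  · have hne : ¬ ∃ u, x u = true := fun hx => by
      rw [hiff.mpr hx] at h; exact Bool.noConfusion h
    simp [hne]
  · simp [hiff.mp h]
end

section
/- Let S be a nonempty finite type, let O be a type, let T : ℕ, and let g : ℕ → S → O be a sequence of labelings (g t i is the outcome obtained by element i at recursion level t). For t ≤ T and i ∈ S, define the level-t equivalence class C_t(i) = {j : S | ∀ τ < t, g τ j = g τ i} (as a Finset of S). Assume the splitting property: for every t < T and every i ∈ S, if C_t(i) has at least 2 elements then there exists j ∈ C_t(i) with g t j ≠ g t i (i.e. g t is non-constant on every non-singleton class). If the cardinality of S is at most 2^T, then there exists i ∈ S whose level-T class is a singleton: C_T(i) = {i}. -/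
/-! Follow one class per level, with the invariant that it has at most one element or at most
`|S| / 2 ^ t` elements. When it has at least two elements, the split gives an element and a
witness with a different label whose level-`t + 1` classes are disjoint subsets of it, so one of
them has at most half its size. At level `T` the bound `|S| ≤ 2 ^ T` leaves at most one element. -/

open Finset

theorem Finset.two_mul_card_le_or_of_disjoint {α : Type*} {s a b : Finset α}
    (ha : a ⊆ s) (hb : b ⊆ s) (hab : Disjoint a b) : 2 * #a ≤ #s ∨ 2 * #b ≤ #s := by
  classical
  have : #a + #b ≤ #s := by
    rw [← card_union_of_disjoint hab]
    exact card_le_card (union_subset ha hb)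
  omega

section LevelClass

variable {S O : Type*} [Fintype S] (g : ℕ → S → O)

open Classical in
noncomputable def levelClass (t : ℕ) (i : S) : Finset S :=
  {j | ∀ τ < t, g τ j = g τ i}

variable {g}

@[simp]
theorem mem_levelClass {t : ℕ} {i j : S} : j ∈ levelClass g t i ↔ ∀ τ < t, g τ j = g τ i := by
  simp [levelClass]

theorem mem_levelClass_self (t : ℕ) (i : S) : i ∈ levelClass g t i :=
  mem_levelClass.2 fun _ _ => rfl

theorem levelClass_succ_subset (t : ℕ) (i : S) : levelClass g (t + 1) i ⊆ levelClass g t i :=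
  fun _ hk => mem_levelClass.2 fun τ hτ => mem_levelClass.1 hk τ (by omega)

theorem levelClass_succ_subset_of_mem {t : ℕ} {i j : S} (hj : j ∈ levelClass g t i) :
    levelClass g (t + 1) j ⊆ levelClass g t i :=
  fun _ hk => mem_levelClass.2 fun τ hτ =>
    (mem_levelClass.1 hk τ (by omega)).trans (mem_levelClass.1 hj τ hτ)

theorem disjoint_levelClass_succ {t : ℕ} {i j : S} (h : g t i ≠ g t j) :
    Disjoint (levelClass g (t + 1) i) (levelClass g (t + 1) j) :=
  disjoint_left.2 fun _ hki hkj =>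
    h ((mem_levelClass.1 hki t t.lt_succ_self).symm.trans (mem_levelClass.1 hkj t t.lt_succ_self))

theorem levelClass_eq_singleton_of_card_le_one {t : ℕ} {i : S} (h : #(levelClass g t i) ≤ 1) :
    levelClass g t i = {i} :=
  eq_singleton_iff_unique_mem.2
    ⟨mem_levelClass_self t i, fun j hj => card_le_one.1 h j hj i (mem_levelClass_self t i)⟩

theorem exists_card_levelClass_le [Nonempty S] (t : ℕ)
    (hsplit : ∀ τ < t, ∀ i : S, 2 ≤ #(levelClass g τ i) →
      ∃ j ∈ levelClass g τ i, g τ j ≠ g τ i) :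
    ∃ i : S, #(levelClass g t i) ≤ 1 ∨ 2 ^ t * #(levelClass g t i) ≤ Fintype.card S := by
  induction t with
  | zero => exact ⟨Classical.arbitrary S, .inr (by simpa using card_le_univ _)⟩
  | succ t ih =>
    obtain ⟨i, hi⟩ := ih fun τ hτ => hsplit τ (by omega)
    by_cases hsmall : #(levelClass g t i) ≤ 1
    · exact ⟨i, .inl ((card_le_card (levelClass_succ_subset t i)).trans hsmall)⟩
    have hle : 2 ^ t * #(levelClass g t i) ≤ Fintype.card S := hi.resolve_left hsmall
    obtain ⟨j, hj, hne⟩ := hsplit t t.lt_succ_self i (by omega)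
    have hdouble : ∀ k, 2 * #(levelClass g (t + 1) k) ≤ #(levelClass g t i) →
        2 ^ (t + 1) * #(levelClass g (t + 1) k) ≤ Fintype.card S := fun k hk =>
      calc 2 ^ (t + 1) * #(levelClass g (t + 1) k) = 2 ^ t * (2 * #(levelClass g (t + 1) k)) := by
            ring
        _ ≤ Fintype.card S := (Nat.mul_le_mul_left _ hk).trans hle
    rcases two_mul_card_le_or_of_disjoint (levelClass_succ_subset t i)
      (levelClass_succ_subset_of_mem hj) (disjoint_levelClass_succ hne.symm) with h | h
    · exact ⟨i, .inr (hdouble i h)⟩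
    · exact ⟨j, .inr (hdouble j h)⟩

end LevelClass

/-- If a nonempty set `S` of at most `2^T` elements is recursively refined `T` times
into equivalence classes `C t i = {j | ∀ τ < t, g τ j = g τ i}`, and at each level every
class of size at least `2` is split (the labeling `g t` is non-constant on it), then
after `T` levels some class is a singleton. -/
theorem stmt8 {S O : Type*} [Fintype S] [Nonempty S] (T : ℕ) (g : ℕ → S → O)
    (C : ℕ → S → Finset S)
    (hC : ∀ t, t ≤ T → ∀ i j : S, j ∈ C t i ↔ ∀ τ < t, g τ j = g τ i)
    (hsplit : ∀ t < T, ∀ i : S, 2 ≤ (C t i).card → ∃ j ∈ C t i, g t j ≠ g t i)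
    (hcard : Fintype.card S ≤ 2 ^ T) :
    ∃ i : S, C T i = {i} := by
  have hC_eq : ∀ t ≤ T, C t = levelClass g t := fun t ht =>
    funext fun i => ext fun j => (hC t ht i j).trans mem_levelClass.symm
  obtain ⟨i, hi⟩ := exists_card_levelClass_le (g := g) T fun τ hτ => by
    simpa only [hC_eq τ hτ.le] using hsplit τ hτ
  refine ⟨i, hC_eq T le_rfl ▸ levelClass_eq_singleton_of_card_le_one ?_⟩
  rcases hi with h | h
  · exact h
  · have : 2 ^ T * #(levelClass g T i) ≤ 2 ^ T * 1 := by omega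
    exact Nat.le_of_mul_le_mul_left this (by positivity)
end
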